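/- The vorticity numerator of the Gerstner flow satisfies X_{tb}·X_a − X_{ta}·X_b − Z_{ta}·Z_b + Z_{tb}·Z_a = −2km·e^{2kb} for all t, a ∈ ℝ and b ∈ ℝ; consequently the vorticity γ = (X_{tb}·X_a − X_{ta}·X_b − Z_{ta}·Z_b + Z_{tb}·Z_a)/(1 − e^{2kb}) equals −2km·e^{2kb}/(1 − e^{2kb}). -/

import Mathlib

noncomputable def gerstnerX (k c m t a b : ℝ) : ℝ :=
  a + (c - m) * t - Real.exp (k * b) / k * Real.sin (k * (a - m * t))

noncomputable def gerstnerZ (k m t a b : ℝ) : ℝ :=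
  b + Real.exp (k * b) / k * Real.cos (k * (a - m * t))

/-!
Every partial derivative of the Gerstner paths is explicit. Writing `E = e^{kb}` and
`θ = k(a - mt)`, the terms linear in `E` cancel and the quadratic ones add up to
`-2kmE²(sin²θ + cos²θ) = -2kmE²`.
-/

open Real

noncomputable def vorticityNumerator (X Z : ℝ → ℝ → ℝ → ℝ) (t a b : ℝ) : ℝ :=
  deriv (fun b' => deriv (fun t' => X t' a b') t) b * deriv (fun a' => X t a' b) a
    - deriv (fun a' => deriv (fun t' => X t' a' b) t) a * deriv (fun b' => X t a b') b
    - deriv (fun a' => deriv (fun t' => Z t' a' b) t) a * deriv (fun b' => Z t a b') b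
    + deriv (fun b' => deriv (fun t' => Z t' a b') t) b * deriv (fun a' => Z t a' b) a

lemma hasDerivAt_phase_time (k m a t : ℝ) :
    HasDerivAt (fun t' => k * (a - m * t')) (-(k * m)) t := by
  simpa using (((hasDerivAt_id t).const_mul m).const_sub a).const_mul k

lemma hasDerivAt_phase_label (k m t a : ℝ) :
    HasDerivAt (fun a' => k * (a' - m * t)) k a := by
  simpa using ((hasDerivAt_id a).sub_const (m * t)).const_mul k

lemma hasDerivAt_exp_const_mul (k b : ℝ) :
    HasDerivAt (fun b' => exp (k * b')) (k * exp (k * b)) b := by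
  simpa [mul_comm] using ((hasDerivAt_id b).const_mul k).exp

lemma hasDerivAt_exp_const_mul_div {k : ℝ} (hk : k ≠ 0) (b : ℝ) :
    HasDerivAt (fun b' => exp (k * b') / k) (exp (k * b)) b := by
  simpa [mul_div_cancel_left₀ _ hk] using (hasDerivAt_exp_const_mul k b).div_const k

section Partials

variable {k : ℝ} (c m t a b : ℝ)

lemma deriv_gerstnerX_time (hk : k ≠ 0) :
    deriv (fun t' => gerstnerX k c m t' a b) t
      = c - m + m * exp (k * b) * cos (k * (a - m * t)) := by
  refine ((((hasDerivAt_id t).const_mul (c - m)).const_add a).sub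
    ((hasDerivAt_phase_time k m a t).sin.const_mul (exp (k * b) / k))).deriv.trans ?_
  field_simp
  ring

lemma deriv_gerstnerZ_time (hk : k ≠ 0) :
    deriv (fun t' => gerstnerZ k m t' a b) t = m * exp (k * b) * sin (k * (a - m * t)) := by
  refine (((hasDerivAt_phase_time k m a t).cos.const_mul (exp (k * b) / k)).const_add
    b).deriv.trans ?_
  field_simp

lemma deriv_gerstnerX_label (hk : k ≠ 0) :
    deriv (fun a' => gerstnerX k c m t a' b) a = 1 - exp (k * b) * cos (k * (a - m * t)) := by
  refine (((hasDerivAt_id a).add_const ((c - m) * t)).sub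
    ((hasDerivAt_phase_label k m t a).sin.const_mul (exp (k * b) / k))).deriv.trans ?_
  field_simp

lemma deriv_gerstnerZ_label (hk : k ≠ 0) :
    deriv (fun a' => gerstnerZ k m t a' b) a = -(exp (k * b) * sin (k * (a - m * t))) := by
  refine (((hasDerivAt_phase_label k m t a).cos.const_mul (exp (k * b) / k)).const_add
    b).deriv.trans ?_
  field_simp

lemma deriv_gerstnerX_depth (hk : k ≠ 0) :
    deriv (fun b' => gerstnerX k c m t a b') b = -(exp (k * b) * sin (k * (a - m * t))) :=
  ((hasDerivAt_const b (a + (c - m) * t)).sub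
    ((hasDerivAt_exp_const_mul_div hk b).mul_const (sin (k * (a - m * t))))).deriv.trans
    (zero_sub _)

lemma deriv_gerstnerZ_depth (hk : k ≠ 0) :
    deriv (fun b' => gerstnerZ k m t a b') b = 1 + exp (k * b) * cos (k * (a - m * t)) :=
  ((hasDerivAt_id b).add ((hasDerivAt_exp_const_mul_div hk b).mul_const _)).deriv

lemma deriv_deriv_gerstnerX_time_depth (hk : k ≠ 0) :
    deriv (fun b' => deriv (fun t' => gerstnerX k c m t' a b') t) b
      = k * m * exp (k * b) * cos (k * (a - m * t)) := by
  simp only [deriv_gerstnerX_time c m t a _ hk]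
  refine ((((hasDerivAt_exp_const_mul k b).const_mul m).mul_const _).const_add
    (c - m)).deriv.trans ?_
  ring

lemma deriv_deriv_gerstnerZ_time_depth (hk : k ≠ 0) :
    deriv (fun b' => deriv (fun t' => gerstnerZ k m t' a b') t) b
      = k * m * exp (k * b) * sin (k * (a - m * t)) := by
  simp only [deriv_gerstnerZ_time m t a _ hk]
  refine (((hasDerivAt_exp_const_mul k b).const_mul m).mul_const _).deriv.trans ?_
  ring

lemma deriv_deriv_gerstnerX_time_label (hk : k ≠ 0) :
    deriv (fun a' => deriv (fun t' => gerstnerX k c m t' a' b) t) a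
      = -(k * m * exp (k * b) * sin (k * (a - m * t))) := by
  simp only [deriv_gerstnerX_time c m t _ b hk]
  refine (((hasDerivAt_phase_label k m t a).cos.const_mul (m * exp (k * b))).const_add
    (c - m)).deriv.trans ?_
  ring

lemma deriv_deriv_gerstnerZ_time_label (hk : k ≠ 0) :
    deriv (fun a' => deriv (fun t' => gerstnerZ k m t' a' b) t) a
      = k * m * exp (k * b) * cos (k * (a - m * t)) := by
  simp only [deriv_gerstnerZ_time m t _ b hk]
  refine ((hasDerivAt_phase_label k m t a).sin.const_mul (m * exp (k * b))).deriv.trans ?_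
  ring

end Partials

theorem vorticityNumerator_gerstner {k : ℝ} (hk : k ≠ 0) (c m t a b : ℝ) :
    vorticityNumerator (gerstnerX k c m) (gerstnerZ k m) t a b
      = -(2 * k * m * exp (2 * k * b)) := by
  rw [vorticityNumerator, deriv_deriv_gerstnerX_time_depth c m t a b hk,
    deriv_gerstnerX_label c m t a b hk, deriv_deriv_gerstnerX_time_label c m t a b hk,
    deriv_gerstnerX_depth c m t a b hk, deriv_deriv_gerstnerZ_time_label m t a b hk,
    deriv_gerstnerZ_depth m t a b hk, deriv_deriv_gerstnerZ_time_depth m t a b hk,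
    deriv_gerstnerZ_label m t a b hk, show 2 * k * b = k * b + k * b by ring, exp_add]
  linear_combination
    (-(2 * k * m * exp (k * b) * exp (k * b))) * sin_sq_add_cos_sq (k * (a - m * t))

/-- vorticity numerator and resulting vorticity formula. -/
theorem stmt_5 (k c m : ℝ) (hk : 0 < k) (t a b : ℝ) :
    deriv (fun b' => deriv (fun t' => gerstnerX k c m t' a b') t) b
        * deriv (fun a' => gerstnerX k c m t a' b) a
      - deriv (fun a' => deriv (fun t' => gerstnerX k c m t' a' b) t) a
        * deriv (fun b' => gerstnerX k c m t a b') b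
      - deriv (fun a' => deriv (fun t' => gerstnerZ k m t' a' b) t) a
        * deriv (fun b' => gerstnerZ k m t a b') b
      + deriv (fun b' => deriv (fun t' => gerstnerZ k m t' a b') t) b
        * deriv (fun a' => gerstnerZ k m t a' b) a
      = -(2 * k * m * Real.exp (2 * k * b))
    ∧ (deriv (fun b' => deriv (fun t' => gerstnerX k c m t' a b') t) b
        * deriv (fun a' => gerstnerX k c m t a' b) a
      - deriv (fun a' => deriv (fun t' => gerstnerX k c m t' a' b) t) a
        * deriv (fun b' => gerstnerX k c m t a b') b
      - deriv (fun a' => deriv (fun t' => gerstnerZ k m t' a' b) t) a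
        * deriv (fun b' => gerstnerZ k m t a b') b
      + deriv (fun b' => deriv (fun t' => gerstnerZ k m t' a b') t) b
        * deriv (fun a' => gerstnerZ k m t a' b) a) / (1 - Real.exp (2 * k * b))
      = -(2 * k * m * Real.exp (2 * k * b)) / (1 - Real.exp (2 * k * b)) := by
  have h := vorticityNumerator_gerstner hk.ne' c m t a b
  exact ⟨h, congrArg (· / (1 - exp (2 * k * b))) h⟩
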